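/- arXiv:1207.4624 — 3 statements merged into one kernel-verified Lean document; each statement's English description precedes it below -/
import Mathlib

section
/- A bounded holomorphic function on the open unit disc that is not identically zero has nonzero radial boundary values almost everywhere on the unit circle; consequently its boundary function cannot vanish on a set of positive measure on the circle. -/
/-!
By Jensen's formula, zeros inside a circle only raise the circle average of `log ‖f‖`, so these
averages are bounded below by some `L` on the circles of radius `r ∈ [1/2, 1)`. Fix radii
`rₙ → 1⁻` and suppose `f (rₙ e^{iθ}) → 0` for `θ` in a set `A` of positive measure in a period.
The zeros of `f` on a circle are a null set, so `log ‖f‖ ≤ log (‖f‖ + δ) ≤ log (C + δ)` a.e., and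
`log (‖f (rₙ e^{iθ})‖ + δ) → log δ` on `A`; dominated convergence then gives
`2πL ≤ |A| log δ + (2π - |A|) log (C + 1)` for every `δ ∈ (0, 1]`, which fails as `δ → 0`.
-/

open MeasureTheory Filter Metric Real Set Topology

theorem abs_log_add_le_max {a C δ : ℝ} (hδ : 0 < δ) (ha : 0 ≤ a) (hC : a ≤ C) :
    |log (a + δ)| ≤ max |log δ| |log (C + δ)| :=
  abs_le_max_abs_abs (log_le_log hδ (by linarith)) (log_le_log (by linarith) (by linarith))

section LogIntegral

variable {α : Type*} [MeasurableSpace α] {μ : Measure α} [IsFiniteMeasure μ]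

theorem tendsto_setIntegral_log_add_of_tendsto_zero {u : ℕ → α → ℝ} {s : Set α} {C δ : ℝ}
    (hδ : 0 < δ) (hmeas : ∀ n, Measurable (u n)) (hnonneg : ∀ n, ∀ᵐ x ∂μ, 0 ≤ u n x)
    (hbdd : ∀ n, ∀ᵐ x ∂μ, u n x ≤ C) (hs : MeasurableSet s)
    (hlim : ∀ x ∈ s, Tendsto (fun n => u n x) atTop (𝓝 0)) :
    Tendsto (fun n => ∫ x in s, log (u n x + δ) ∂μ) atTop (𝓝 (μ.real s * log δ)) := by
  rw [← smul_eq_mul, ← setIntegral_const]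
  refine tendsto_integral_of_dominated_convergence (fun _ => max |log δ| |log (C + δ)|)
    (fun n => ((hmeas n).add_const δ).log.aestronglyMeasurable) (integrable_const _)
    (fun n => ?_) ((ae_restrict_iff' hs).mpr (.of_forall fun x hx => ?_))
  · filter_upwards [ae_restrict_of_ae (hnonneg n), ae_restrict_of_ae (hbdd n)] with x h₀ hC
    exact abs_log_add_le_max hδ h₀ hC
  · simpa using ((hlim x hx).add_const δ).log (by simp [hδ.ne'])

theorem integral_log_le_setIntegral_log_add {u : α → ℝ} {s : Set α} {C δ : ℝ}
    (hδ : 0 < δ) (hmeas : Measurable u) (hpos : ∀ᵐ x ∂μ, 0 < u x) (hbdd : ∀ᵐ x ∂μ, u x ≤ C)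
    (hint : Integrable (fun x => log (u x)) μ) (hs : MeasurableSet s) :
    ∫ x, log (u x) ∂μ ≤ ∫ x in s, log (u x + δ) ∂μ + μ.real sᶜ * log (C + δ) := by
  have hint' : Integrable (fun x => log (u x + δ)) μ := by
    refine .of_bound (hmeas.add_const δ).log.aestronglyMeasurable (max |log δ| |log (C + δ)|) ?_
    filter_upwards [hpos, hbdd] with x h₀ hC
    exact abs_log_add_le_max hδ h₀.le hC
  calc ∫ x, log (u x) ∂μ ≤ ∫ x, log (u x + δ) ∂μ := by
        refine integral_mono_ae hint hint' ?_
        filter_upwards [hpos] with x hx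
        exact log_le_log hx (by linarith)
    _ = ∫ x in s, log (u x + δ) ∂μ + ∫ x in sᶜ, log (u x + δ) ∂μ :=
        (integral_add_compl hs hint').symm
    _ ≤ ∫ x in s, log (u x + δ) ∂μ + μ.real sᶜ * log (C + δ) := by
        gcongr
        rw [← smul_eq_mul, ← setIntegral_const]
        refine integral_mono_ae hint'.restrict (integrable_const _) ?_
        filter_upwards [ae_restrict_of_ae hpos, ae_restrict_of_ae hbdd] with x h₀ hC
        exact log_le_log (by linarith) (by linarith)

theorem measure_setOf_tendsto_zero_eq_zero_of_le_integral_log {u : ℕ → α → ℝ} {C L : ℝ}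
    (hmeas : ∀ n, Measurable (u n)) (hpos : ∀ n, ∀ᵐ x ∂μ, 0 < u n x)
    (hbdd : ∀ n, ∀ᵐ x ∂μ, u n x ≤ C) (hint : ∀ n, Integrable (fun x => log (u n x)) μ)
    (hL : ∀ n, L ≤ ∫ x, log (u n x) ∂μ) :
    μ {x | Tendsto (fun n => u n x) atTop (𝓝 0)} = 0 := by
  set s := {x | Tendsto (fun n => u n x) atTop (𝓝 0)}
  have hs : MeasurableSet s := measurableSet_tendsto _ hmeas
  by_contra hs0
  have hC : 0 ≤ C := by
    have : (ae μ).NeBot := ae_neBot.mpr fun hμ => hs0 (by simp [hμ])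
    obtain ⟨x, h₀, hC⟩ := ((hpos 0).and (hbdd 0)).exists
    linarith
  have hbound : ∀ δ ∈ Ioc (0 : ℝ) 1, L ≤ μ.real s * log δ + μ.real sᶜ * log (C + 1) := by
    intro δ ⟨hδ, hδ1⟩
    have hlim := (tendsto_setIntegral_log_add_of_tendsto_zero hδ hmeas
      (fun n => (hpos n).mono fun x hx => hx.le) hbdd hs fun x hx => hx).add_const
      (μ.real sᶜ * log (C + δ))
    calc L ≤ μ.real s * log δ + μ.real sᶜ * log (C + δ) :=
          ge_of_tendsto' hlim fun n => (hL n).trans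
            (integral_log_le_setIntegral_log_add hδ (hmeas n) (hpos n) (hbdd n) (hint n) hs)
      _ ≤ μ.real s * log δ + μ.real sᶜ * log (C + 1) := by
          gcongr
  have hbot : Tendsto (fun δ => μ.real s * log δ + μ.real sᶜ * log (C + 1)) (𝓝[>] 0) atBot :=
    tendsto_atBot_add_const_right _ _ (tendsto_log_nhdsGT_zero.const_mul_atBot
      (ENNReal.toReal_pos hs0 (measure_ne_top μ s)))
  obtain ⟨δ, hδL, hδ⟩ := ((hbot.eventually (eventually_lt_atBot L)).and
    (Ioc_mem_nhdsGT one_pos)).exists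
  exact (hbound δ hδ).not_gt hδL

end LogIntegral

theorem measure_eq_zero_of_forall_restrict_Ioc_eq_zero {μ : Measure ℝ} {s : Set ℝ} {p : ℝ}
    (hp : 0 < p) (h : ∀ η, μ.restrict (Ioc η (η + p)) s = 0) : μ s = 0 := by
  refine measure_mono_null (fun θ hθ => ?_) (measure_iUnion_null fun k : ℤ =>
    (Measure.restrict_apply' measurableSet_Ioc).symm.trans (h (k • p)))
  obtain ⟨k, hk⟩ := mem_iUnion.mp ((iUnion_Ioc_add_zsmul hp 0).symm ▸ mem_univ θ)
  refine mem_iUnion.mpr ⟨k, hθ, ?_⟩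
  simpa [add_smul, add_assoc] using hk

theorem setIntegral_Ioc_circleMap_eq_two_pi_mul_circleAverage (f : ℂ → ℝ) (c : ℂ) (R η : ℝ) :
    ∫ θ in Ioc η (η + 2 * π), f (circleMap c R θ) = 2 * π * circleAverage f c R := by
  have hper : Function.Periodic (fun θ => f (circleMap c R θ)) (2 * π) :=
    (periodic_circleMap c R).comp f
  rw [← intervalIntegral.integral_of_le (by linarith [pi_pos]),
    hper.intervalIntegral_add_eq η 0, circleAverage_def,
    smul_eq_mul, zero_add, ← mul_assoc, mul_inv_cancel₀ two_pi_pos.ne', one_mul]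

theorem CircleIntegrable.integrableOn_Ioc {f : ℂ → ℝ} {c : ℂ} {R : ℝ}
    (hf : CircleIntegrable f c R) (η : ℝ) :
    IntegrableOn (fun θ => f (circleMap c R θ)) (Ioc η (η + 2 * π)) :=
  (((periodic_circleMap c R).comp f).intervalIntegrable₀ two_pi_pos.ne' hf η
    (η + 2 * π)).1

theorem AnalyticOnNhd.ae_circleMap_ne_zero {U : Set ℂ} {f : ℂ → ℂ} {x c : ℂ} {R : ℝ}
    (hf : AnalyticOnNhd ℂ f U) (hU : IsConnected U) (hx : x ∈ U) (hfx : f x ≠ 0) (hR : R ≠ 0)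
    (hsphere : sphere c |R| ⊆ U) :
    ∀ᵐ θ, f (circleMap c R θ) ≠ 0 := by
  have hzeros : f ⁻¹' {0}ᶜ ∈ codiscreteWithin (sphere c |R|) :=
    codiscreteWithin_mono hsphere (hf.preimage_zero_mem_codiscreteWithin hfx hx hU)
  have := ae_restrict_le_codiscreteWithin (μ := volume) MeasurableSet.univ
    (circleMap_preimage_codiscrete hR hzeros)
  rwa [Measure.restrict_univ] at this

theorem AnalyticOnNhd.le_circleAverage_log_norm {c : ℂ} {R : ℝ} {f : ℂ → ℂ} (hR : R ≠ 0)
    (hf : AnalyticOnNhd ℂ f (closedBall c |R|)) :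
    (meromorphicOrderAt f c).untop₀ * Real.log R + Real.log ‖meromorphicTrailingCoeffAt f c‖ ≤
      circleAverage (Real.log ‖f ·‖) c R := by
  rw [hf.meromorphicOn.circleAverage_log_norm hR,
    hf.meromorphicOn.divisor_apply (mem_closedBall_self (abs_nonneg R))]
  suffices
      0 ≤ ∑ᶠ u, (MeromorphicOn.divisor f (closedBall c |R|) u : ℝ) * Real.log (R * ‖c - u‖⁻¹) by
    linarith
  refine finsum_nonneg fun u => ?_
  by_cases hu : u ∈ closedBall c |R|
  · refine mul_nonneg (Int.cast_nonneg_iff.mpr (MeromorphicOn.AnalyticOnNhd.divisor_nonneg hf u)) ?_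
    rw [← Real.log_abs, abs_mul, abs_inv, abs_norm]
    rcases eq_or_ne u c with rfl | huc
    · simp
    · rw [mem_closedBall, dist_comm, dist_eq_norm] at hu
      exact Real.log_nonneg ((one_le_div (norm_pos_iff.mpr (sub_ne_zero.mpr huc.symm))).mpr hu)
  · simp [Function.locallyFinsuppWithin.apply_eq_zero_of_notMem _ hu]

theorem AnalyticOnNhd.exists_le_circleAverage_log_norm {c : ℂ} {r₀ ρ : ℝ} {f : ℂ → ℂ}
    (hr₀ : 0 < r₀) (hf : AnalyticOnNhd ℂ f (ball c ρ)) :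
    ∃ L, ∀ R ∈ Ico r₀ ρ, L ≤ circleAverage (Real.log ‖f ·‖) c R := by
  refine ⟨(meromorphicOrderAt f c).untop₀ * Real.log r₀ + Real.log ‖meromorphicTrailingCoeffAt f c‖,
    fun R hR => le_trans ?_ ((hf.mono ?_).le_circleAverage_log_norm (hr₀.trans_le hR.1).ne')⟩
  · have hρ : c ∈ ball c ρ := mem_ball_self (hr₀.trans_le hR.1 |>.trans hR.2)
    have hord : (0 : ℝ) ≤ (meromorphicOrderAt f c).untop₀ :=
      Int.cast_nonneg_iff.mpr (WithTop.untop₀_nonneg.mpr (hf c hρ).meromorphicOrderAt_nonneg)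
    gcongr
    exact hR.1
  · rw [abs_of_pos (hr₀.trans_le hR.1)]
    exact closedBall_subset_ball hR.2

theorem AnalyticOnNhd.volume_setOf_tendsto_norm_circleMap_eq_zero {f : ℂ → ℂ} {c : ℂ}
    {r₀ ρ C : ℝ} {r : ℕ → ℝ} (hf : AnalyticOnNhd ℂ f (ball c ρ))
    (hbd : ∀ z ∈ ball c ρ, ‖f z‖ ≤ C) (hne : ∃ z ∈ ball c ρ, f z ≠ 0) (hr₀ : 0 < r₀)
    (hr : ∀ n, r n ∈ Ico r₀ ρ) :
    volume {θ | Tendsto (fun n => ‖f (circleMap c (r n) θ)‖) atTop (𝓝 0)} = 0 := by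
  obtain ⟨L, hL⟩ := hf.exists_le_circleAverage_log_norm hr₀
  obtain ⟨z, hz, hfz⟩ := hne
  have hsphere (n : ℕ) : sphere c |r n| ⊆ ball c ρ := by
    rw [abs_of_pos (hr₀.trans_le (hr n).1)]
    exact sphere_subset_ball (hr n).2
  have hmem (n : ℕ) (θ : ℝ) : circleMap c (r n) θ ∈ ball c ρ :=
    hsphere n (circleMap_mem_sphere' c (r n) θ)
  refine measure_eq_zero_of_forall_restrict_Ioc_eq_zero two_pi_pos fun η =>
    measure_setOf_tendsto_zero_eq_zero_of_le_integral_log (C := C) (L := 2 * π * L)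
      (fun n => ?_) (fun n => ?_) (fun n => .of_forall fun θ => hbd _ (hmem n θ))
      (fun n => ?_) (fun n => ?_)
  · exact (hf.continuousOn.comp_continuous (continuous_circleMap c (r n)) (hmem n)).norm.measurable
  · exact ae_restrict_of_ae ((hf.ae_circleMap_ne_zero (isConnected_ball (pos_of_mem_ball hz)) hz hfz
      (hr₀.trans_le (hr n).1).ne' (hsphere n)).mono fun θ hθ => norm_pos_iff.mpr hθ)
  · exact ((hf.mono (hsphere n)).meromorphicOn.circleIntegrable_log_norm).integrableOn_Ioc η
  · rw [setIntegral_Ioc_circleMap_eq_two_pi_mul_circleAverage (Real.log ‖f ·‖)]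
    gcongr
    exact hL (r n) (hr n)

/-- A bounded holomorphic function on the open unit disc, not identically zero,
has nonzero radial boundary values almost everywhere: the set of angles θ where
the radial limit exists and equals zero has Lebesgue measure zero. -/
theorem bounded_holomorphic_radial_limits_nonzero_ae
    (f : ℂ → ℂ) (hf : DifferentiableOn ℂ f (ball (0:ℂ) 1))
    (hbd : ∃ C : ℝ, ∀ z ∈ ball (0:ℂ) 1, ‖f z‖ ≤ C)
    (hne : ∃ z ∈ ball (0:ℂ) 1, f z ≠ 0) :
    volume {θ : ℝ | Tendsto (fun r : ℝ => f ((r : ℂ) * Complex.exp (θ * Complex.I)))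
      (nhdsWithin 1 (Set.Iio 1)) (nhds 0)} = 0 := by
  obtain ⟨C, hC⟩ := hbd
  obtain ⟨r, -, hr, hr_lim⟩ := exists_seq_strictMono_tendsto' (one_half_lt_one (α := ℝ))
  have hr_lim' : Tendsto r atTop (𝓝[<] 1) :=
    tendsto_nhdsWithin_iff.mpr ⟨hr_lim, .of_forall fun n => (hr n).2⟩
  refine measure_mono_null (fun θ hθ => ?_)
    ((hf.analyticOnNhd isOpen_ball).volume_setOf_tendsto_norm_circleMap_eq_zero hC hne
      one_half_pos fun n => Ioo_subset_Ico_self (hr n))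
  simpa [circleMap_zero, Function.comp_def] using (hθ.comp hr_lim').norm
end

section
/- If for every \epsilon > 0 the constant function -1 on [0,H] can be approximated within \epsilon in L^2(0,H) by a finite generalized Dirichlet polynomial \sum_{n=1}^N b_n e^{-i\lambda_n t} (with \lambda_n > 0 strictly increasing), then the set of all such Dirichlet polynomials is dense in L^2(0,H). -/
/-!
Let `V` be the closure in `L²(0,H)` of the span of the exponentials `e_λ(t) = e^{-iλt}`. By
hypothesis `-1`, hence `1`, lies in `V`. The primitive operator `(Pu)(t) = ∫₀ᵗ u` is bounded on
`L²(0,H)` and sends `e_λ` to `(e_λ - 1)/(-iλ) ∈ V`, so by continuity it maps `V` into itself.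
Since `t^(k+1) = (k+1) P(t^k)`, all monomials lie in `V`; and polynomials are dense in `L²(0,H)`
(continuous functions are dense, and Weierstrass), so `V` is the whole space.
-/

open MeasureTheory Filter Complex Set

theorem Continuous.memLp_restrict_Ioo {E : Type*} [NormedAddCommGroup E] {g : ℝ → E}
    (hg : Continuous g) (p : ENNReal) (a b : ℝ) : MemLp g p (volume.restrict (Ioo a b)) := by
  obtain ⟨C, hC⟩ := (isCompact_Icc (a := a) (b := b)).exists_bound_of_continuousOn hg.continuousOn
  refine MemLp.of_bound hg.aestronglyMeasurable C ?_
  exact (ae_restrict_iff' measurableSet_Ioo).2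
    (ae_of_all _ fun t ht => hC t (Ioo_subset_Icc_self ht))

theorem MeasureTheory.MemLp.toLp_finset_sum_smul {α E 𝕜 ι : Type*} [MeasurableSpace α]
    {μ : Measure α} {p : ENNReal} [Fact (1 ≤ p)] [NormedAddCommGroup E] [NormedRing 𝕜]
    [Module 𝕜 E] [IsBoundedSMul 𝕜 E] (s : Finset ι) (b : ι → 𝕜) {f : ι → α → E}
    (hf : ∀ i, MemLp (f i) p μ) (h : MemLp (fun x => ∑ i ∈ s, b i • f i x) p μ) :
    h.toLp _ = ∑ i ∈ s, b i • (hf i).toLp (f i) := by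
  classical
  induction s using Finset.induction_on with
  | empty =>
    rw [Finset.sum_empty, MemLp.toLp_congr h MemLp.zero (ae_of_all _ fun _ => by simp),
      MemLp.toLp_zero]
  | insert i s hi ih =>
    have hs : MemLp (fun x => ∑ j ∈ s, b j • f j x) p μ :=
      memLp_finsetSum s fun j _ => (hf j).const_smul (b j)
    rw [Finset.sum_insert hi, ← ih hs, ← MemLp.toLp_const_smul, ← MemLp.toLp_add]
    exact MemLp.toLp_congr _ _ (ae_of_all _ fun x => by simp [Finset.sum_insert hi])

theorem Submodule.exists_eq_sum_range_of_mem_span_range {R M : Type*} [Semiring R]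
    [AddCommMonoid M] [Module R M] {e : ℕ → M} {x : M} (hx : x ∈ Submodule.span R (range e)) :
    ∃ (N : ℕ) (b : ℕ → R), x = ∑ n ∈ Finset.range N, b n • e n := by
  obtain ⟨c, rfl⟩ := Finsupp.mem_span_range_iff_exists_finsupp.1 hx
  refine ⟨c.support.sup id + 1, c, Finsupp.sum_of_support_subset c (fun n hn => ?_) _ (by simp)⟩
  exact Finset.mem_range.2 (Nat.lt_succ_of_le (Finset.le_sup (f := id) hn))

open Polynomial in
theorem exists_polynomial_near_of_continuousOn_complex (a b : ℝ) {g : ℝ → ℂ}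
    (hg : ContinuousOn g (Icc a b)) {ε : ℝ} (hε : 0 < ε) :
    ∃ P : ℂ[X], ∀ t ∈ Icc a b, ‖P.eval (t : ℂ) - g t‖ < ε := by
  obtain ⟨p, hp⟩ := exists_polynomial_near_of_continuousOn a b (fun t => (g t).re)
    (continuous_re.comp_continuousOn hg) (ε / 2) (half_pos hε)
  obtain ⟨q, hq⟩ := exists_polynomial_near_of_continuousOn a b (fun t => (g t).im)
    (continuous_im.comp_continuousOn hg) (ε / 2) (half_pos hε)
  refine ⟨p.map (algebraMap ℝ ℂ) + C I * q.map (algebraMap ℝ ℂ), fun t ht => ?_⟩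
  have hP : (p.map (algebraMap ℝ ℂ) + C I * q.map (algebraMap ℝ ℂ)).eval (t : ℂ) =
      ((p.eval t : ℝ) : ℂ) + I * ((q.eval t : ℝ) : ℂ) := by
    simp [← Complex.coe_algebraMap, aeval_algebraMap_apply_eq_algebraMap_eval]
  calc _ ≤ |(_ - g t).re| + |(_ - g t).im| := norm_le_abs_re_add_abs_im _
    _ < ε / 2 + ε / 2 := by
      rw [hP]
      simp only [sub_re, sub_im, add_re, add_im, mul_re, mul_im, I_re, I_im]
      gcongr
      · simpa using hp t ht
      · simpa using hq t ht
    _ = ε := add_halves ε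

section Primitive

variable {μ : Measure ℝ} [IsFiniteMeasure μ]

theorem norm_intervalIntegral_Lp_le (u : Lp ℂ 2 μ) (a b : ℝ) :
    ‖∫ x in a..b, u x ∂μ‖ ≤ μ.real univ ^ (1 / 2 : ℝ) * ‖u‖ := by
  have hs : MeasurableSet (uIoc a b) := measurableSet_uIoc
  rw [intervalIntegral.norm_integral_eq_norm_integral_uIoc,
    ← L2.inner_indicatorConstLp_one (𝕜 := ℂ) hs (measure_ne_top μ _)]
  refine (norm_inner_le_norm _ _).trans (mul_le_mul_of_nonneg_right ?_ (norm_nonneg _))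
  refine norm_indicatorConstLp_le.trans ?_
  rw [norm_one, one_mul, ENNReal.toReal_ofNat]
  gcongr
  · exact measure_ne_top μ _
  · exact subset_univ _

variable [NullSingletonClass μ]

theorem memLp_primitive (u : Lp ℂ 2 μ) : MemLp (fun t => ∫ s in 0..t, u s ∂μ) 2 μ :=
  MemLp.of_bound (((Lp.memLp u).integrable one_le_two).continuous_primitive 0).aestronglyMeasurable
    _ (ae_of_all _ fun t => norm_intervalIntegral_Lp_le u 0 t)

variable (μ) in
noncomputable def primitiveCLM : Lp ℂ 2 μ →L[ℂ] Lp ℂ 2 μ :=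
  LinearMap.mkContinuous
    { toFun := fun u => (memLp_primitive u).toLp _
      map_add' := fun u v => by
        rw [← MemLp.toLp_add]
        refine MemLp.toLp_congr _ _ (ae_of_all _ fun t => ?_)
        have hint : ∀ w : Lp ℂ 2 μ, IntervalIntegrable w μ 0 t := fun w =>
          ((Lp.memLp w).integrable one_le_two).intervalIntegrable
        rw [Pi.add_apply, ← intervalIntegral.integral_add (hint u) (hint v)]
        exact intervalIntegral.integral_congr_ae
          ((Lp.coeFn_add u v).mono fun x hx _ => hx)
      map_smul' := fun c u => by
        rw [RingHom.id_apply, ← MemLp.toLp_const_smul]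
        refine MemLp.toLp_congr _ _ (ae_of_all _ fun t => ?_)
        rw [Pi.smul_apply, ← intervalIntegral.integral_smul]
        exact intervalIntegral.integral_congr_ae
          ((Lp.coeFn_smul c u).mono fun x hx _ => hx) }
    (measureUnivNNReal μ ^ (2 : ENNReal).toReal⁻¹ * μ.real univ ^ (1 / 2 : ℝ)) fun u => by
      rw [mul_assoc]
      refine Lp.norm_le_of_ae_bound (by positivity) ?_
      filter_upwards [(memLp_primitive u).coeFn_toLp] with t ht
      rw [LinearMap.coe_mk, AddHom.coe_mk, ht]
      exact norm_intervalIntegral_Lp_le u 0 t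

theorem coeFn_primitiveCLM (u : Lp ℂ 2 μ) :
    primitiveCLM μ u =ᵐ[μ] fun t => ∫ s in 0..t, u s ∂μ :=
  (memLp_primitive u).coeFn_toLp

end Primitive

section IntervalMeasure

variable {H : ℝ}

local notation "μH" => volume.restrict (Ioo (0 : ℝ) H)

theorem intervalIntegral_restrict_Ioo_of_mem {t : ℝ} (ht : t ∈ Ioo 0 H) (g : ℝ → ℂ) :
    ∫ s in 0..t, g s ∂μH = ∫ s in 0..t, g s := by
  rw [intervalIntegral.integral_of_le ht.1.le, intervalIntegral.integral_of_le ht.1.le,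
    Measure.restrict_restrict measurableSet_Ioc, inter_eq_left.2 (Ioc_subset_Ioo_right ht.2)]

theorem primitiveCLM_ae_eq {u : Lp ℂ 2 μH} {g : ℝ → ℂ} (hu : u =ᵐ[μH] g) :
    primitiveCLM μH u =ᵐ[μH] fun t => ∫ s in 0..t, g s := by
  filter_upwards [coeFn_primitiveCLM u, ae_restrict_mem measurableSet_Ioo] with t h ht
  rw [h, ← intervalIntegral_restrict_Ioo_of_mem ht]
  exact intervalIntegral.integral_congr_ae (hu.mono fun x hx _ => hx)

theorem intervalIntegral_norm_sq_eq_norm_sq (hH : 0 < H) (u : Lp ℂ 2 μH) {φ : ℝ → ℂ}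
    (hφ : u =ᵐ[μH] φ) :
    ∫ t in 0..H, ‖φ t‖ ^ 2 = ‖u‖ ^ 2 := by
  have hsq : (fun t => ‖φ t‖ ^ 2) =ᵐ[μH] fun t => ‖u t‖ ^ 2 := hφ.mono fun t ht => by simp only [ht]
  rw [intervalIntegral.integral_of_le hH.le, integral_Ioc_eq_integral_Ioo, integral_congr_ae hsq,
    @norm_sq_eq_re_inner ℂ, L2.inner_def]
  simp_rw [inner_self_eq_norm_sq_to_K]
  norm_cast

variable (H) in
noncomputable def expLp (c : ℂ) : Lp ℂ 2 μH :=
  ((by fun_prop : Continuous fun t : ℝ => exp (c * t)).memLp_restrict_Ioo 2 0 H).toLp _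

variable (H) in
noncomputable def monomialLp (k : ℕ) : Lp ℂ 2 μH :=
  ((by fun_prop : Continuous fun t : ℝ => (t : ℂ) ^ k).memLp_restrict_Ioo 2 0 H).toLp _

theorem coeFn_expLp (c : ℂ) : expLp H c =ᵐ[μH] fun t => exp (c * t) := MemLp.coeFn_toLp _

theorem coeFn_monomialLp (k : ℕ) : monomialLp H k =ᵐ[μH] fun t => (t : ℂ) ^ k :=
  MemLp.coeFn_toLp _

theorem monomialLp_zero : monomialLp H 0 = Lp.const 2 μH 1 :=
  MemLp.toLp_congr _ (memLp_const 1) (ae_of_all _ fun _ => pow_zero _)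

theorem primitiveCLM_expLp {c : ℂ} (hc : c ≠ 0) :
    primitiveCLM μH (expLp H c) = c⁻¹ • (expLp H c - Lp.const 2 μH 1) := by
  refine Lp.ext ?_
  filter_upwards [primitiveCLM_ae_eq (coeFn_expLp c),
    Lp.coeFn_smul c⁻¹ (expLp H c - Lp.const 2 μH 1), Lp.coeFn_sub (expLp H c) (Lp.const 2 μH 1),
    coeFn_expLp c, Lp.coeFn_const 2 μH (1 : ℂ)] with t h_prim h_smul h_sub h_exp h_one
  rw [h_prim, h_smul, Pi.smul_apply, h_sub, Pi.sub_apply, h_exp, h_one,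
    integral_exp_mul_complex hc]
  simp [div_eq_inv_mul]

theorem primitiveCLM_monomialLp (k : ℕ) :
    primitiveCLM μH (monomialLp H k) = ((k : ℂ) + 1)⁻¹ • monomialLp H (k + 1) := by
  refine Lp.ext ?_
  filter_upwards [primitiveCLM_ae_eq (coeFn_monomialLp k),
    Lp.coeFn_smul ((k : ℂ) + 1)⁻¹ (monomialLp H (k + 1)), coeFn_monomialLp (k + 1)]
    with t h_prim h_smul h_mon
  rw [h_prim, h_smul, Pi.smul_apply, h_mon]
  simp_rw [← ofReal_pow, intervalIntegral.integral_ofReal, integral_pow]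
  push_cast
  ring

open Polynomial in
theorem toLp_eval_mem_span_monomialLp (P : ℂ[X]) (hP : MemLp (fun t : ℝ => P.eval (t : ℂ)) 2 μH) :
    hP.toLp _ ∈ Submodule.span ℂ (range (monomialLp H)) := by
  have hsum : MemLp (fun t : ℝ => ∑ i ∈ Finset.range (P.natDegree + 1), P.coeff i • (t : ℂ) ^ i)
      2 μH := by
    simpa only [smul_eq_mul, ← eval_eq_sum_range] using hP
  rw [MemLp.toLp_congr hP hsum (ae_of_all _ fun t => by simp [eval_eq_sum_range]),
    MemLp.toLp_finset_sum_smul _ _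
      (fun k => (by fun_prop : Continuous fun t : ℝ => (t : ℂ) ^ k).memLp_restrict_Ioo 2 0 H) hsum]
  exact Submodule.sum_mem _ fun k _ => Submodule.smul_mem _ _ (Submodule.subset_span ⟨k, rfl⟩)

theorem topologicalClosure_span_monomialLp_eq_top :
    (Submodule.span ℂ (range (monomialLp H))).topologicalClosure = ⊤ := by
  set W := (Submodule.span ℂ (range (monomialLp H))).topologicalClosure
  have hcont : range (BoundedContinuousFunction.toLp 2 μH ℂ) ⊆ (W : Set (Lp ℂ 2 μH)) := by
    rintro _ ⟨g, rfl⟩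
    refine Metric.mem_closure_iff.2 fun ε hε => ?_
    set K : ℝ := measureUnivNNReal μH ^ (2 : ENNReal).toReal⁻¹
    have hK : 0 ≤ K := by positivity
    obtain ⟨P, hP⟩ := exists_polynomial_near_of_continuousOn_complex 0 H g.continuous.continuousOn
      (ε := ε / (K + 1)) (by positivity)
    have hPm : MemLp (fun t : ℝ => P.eval (t : ℂ)) 2 μH :=
      (P.continuous.comp continuous_ofReal).memLp_restrict_Ioo 2 0 H
    refine ⟨hPm.toLp _, toLp_eval_mem_span_monomialLp P hPm, ?_⟩
    rw [dist_eq_norm]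
    calc _ ≤ K * (ε / (K + 1)) := by
          refine Lp.norm_le_of_ae_bound (by positivity) ?_
          filter_upwards [Lp.coeFn_sub (BoundedContinuousFunction.toLp 2 μH ℂ g) (hPm.toLp _),
            BoundedContinuousFunction.coeFn_toLp 2 μH ℂ g, hPm.coeFn_toLp,
            ae_restrict_mem measurableSet_Ioo] with t h_sub h_g h_P ht
          rw [h_sub, Pi.sub_apply, h_g, h_P, norm_sub_rev]
          exact (hP t (Ioo_subset_Icc_self ht)).le
      _ < ε := by
          rw [mul_div_assoc', div_lt_iff₀ (by positivity)]
          linarith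
  refine eq_top_iff.2 fun u _ => ?_
  have hu : u ∈ closure (range (BoundedContinuousFunction.toLp 2 μH ℂ)) := by
    rw [(BoundedContinuousFunction.toLp_denseRange (p := 2) ℂ μH ℂ
      ENNReal.ofNat_ne_top).closure_range]
    exact mem_univ u
  exact closure_minimal hcont (Submodule.isClosed_topologicalClosure _) hu

theorem topologicalClosure_span_expLp_eq_top {ι : Type*} {c : ι → ℂ} (hc : ∀ i, c i ≠ 0)
    (hone : Lp.const 2 μH (1 : ℂ) ∈ (Submodule.span ℂ (range (expLp H ∘ c))).topologicalClosure) :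
    (Submodule.span ℂ (range (expLp H ∘ c))).topologicalClosure = ⊤ := by
  set V := (Submodule.span ℂ (range (expLp H ∘ c))).topologicalClosure
  have hV : IsClosed (V : Set (Lp ℂ 2 μH)) := Submodule.isClosed_topologicalClosure _
  have hprim : V.map (primitiveCLM μH : Lp ℂ 2 μH →ₗ[ℂ] Lp ℂ 2 μH) ≤ V := by
    refine (Submodule.topologicalClosure_map _ _).trans
      (Submodule.topologicalClosure_minimal _ ?_ hV)
    rw [Submodule.map_span_le]
    rintro _ ⟨i, rfl⟩
    rw [ContinuousLinearMap.coe_coe, Function.comp_apply, primitiveCLM_expLp (hc i)]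
    exact V.smul_mem _
      (V.sub_mem (Submodule.le_topologicalClosure _ (Submodule.subset_span ⟨i, rfl⟩)) hone)
  have hmon : ∀ k, monomialLp H k ∈ V := by
    intro k
    induction k with
    | zero => rwa [monomialLp_zero]
    | succ k ih =>
      rw [← smul_inv_smul₀ (Nat.cast_add_one_ne_zero k : (k : ℂ) + 1 ≠ 0) (monomialLp H (k + 1)),
        ← primitiveCLM_monomialLp]
      exact V.smul_mem _ (hprim ⟨_, ih, rfl⟩)
  rw [eq_top_iff, ← topologicalClosure_span_monomialLp_eq_top]
  exact Submodule.topologicalClosure_minimal _ (Submodule.span_le.2 (range_subset_iff.2 hmon)) hV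

theorem coeFn_sum_smul_expLp {ι : Type*} (s : Finset ι) (b : ι → ℂ) (c : ι → ℂ) :
    ⇑(∑ i ∈ s, b i • expLp H (c i)) =ᵐ[μH] fun t => ∑ i ∈ s, b i * exp (c i * t) := by
  have h : MemLp (fun t : ℝ => ∑ i ∈ s, b i • exp (c i * t)) 2 μH :=
    (by fun_prop : Continuous fun t : ℝ => ∑ i ∈ s, b i • exp (c i * t)).memLp_restrict_Ioo 2 0 H
  have hsum : h.toLp _ = ∑ i ∈ s, b i • expLp H (c i) := MemLp.toLp_finset_sum_smul s b
    (fun i => (by fun_prop : Continuous fun t : ℝ => exp (c i * t)).memLp_restrict_Ioo 2 0 H) h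
  exact hsum ▸ h.coeFn_toLp

theorem dist_sum_smul_expLp_sq (hH : 0 < H) (u : Lp ℂ 2 μH) {φ : ℝ → ℂ} (hu : u =ᵐ[μH] φ)
    {ι : Type*} (s : Finset ι) (b : ι → ℂ) (c : ι → ℂ) :
    dist u (∑ i ∈ s, b i • expLp H (c i)) ^ 2 =
      ∫ t in 0..H, ‖φ t - ∑ i ∈ s, b i * exp (c i * t)‖ ^ 2 := by
  rw [dist_eq_norm, intervalIntegral_norm_sq_eq_norm_sq hH _ ?_]
  filter_upwards [Lp.coeFn_sub u (∑ i ∈ s, b i • expLp H (c i)), hu, coeFn_sum_smul_expLp s b c]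
    with t h_sub h_u h_sum
  rw [h_sub, Pi.sub_apply, h_u, h_sum]

end IntervalMeasure

theorem density_from_approx_of_neg_one_general
    (H : ℝ) (hH : 0 < H)
    (lam : ℕ → ℝ) (hpos : ∀ n, 0 < lam n)
    (happrox : ∀ ε > (0:ℝ), ∃ (N : ℕ) (b : ℕ → ℂ),
      (∫ t in (0:ℝ)..H,
        ‖(-1 : ℂ) - ∑ n ∈ Finset.range N, b n * Complex.exp (-Complex.I * (lam n) * t)‖ ^ 2)
        < ε) :
    ∀ (f : Lp ℂ 2 (volume.restrict (Set.Ioo (0:ℝ) H))), ∀ ε > (0:ℝ),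
      ∃ (N : ℕ) (b : ℕ → ℂ),
        (∫ t in (0:ℝ)..H,
          ‖f t - ∑ n ∈ Finset.range N, b n * Complex.exp (-Complex.I * (lam n) * t)‖ ^ 2)
          < ε := by
  set S := Submodule.span ℂ (range (expLp H ∘ fun n => -I * lam n))
  have hneg : Lp.const 2 _ (-1 : ℂ) ∈ S.topologicalClosure := by
    refine Metric.mem_closure_iff.2 fun δ hδ => ?_
    obtain ⟨N, b, hNb⟩ := happrox (δ ^ 2) (by positivity)
    refine ⟨∑ n ∈ Finset.range N, b n • expLp H (-I * lam n),
      S.sum_mem fun n _ => S.smul_mem _ (Submodule.subset_span ⟨n, rfl⟩), ?_⟩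
    rw [← dist_sum_smul_expLp_sq hH _ (φ := fun _ => -1) (Lp.coeFn_const 2 _ (-1 : ℂ))] at hNb
    exact lt_of_pow_lt_pow_left₀ 2 hδ.le hNb
  have hdense : S.topologicalClosure = ⊤ :=
    topologicalClosure_span_expLp_eq_top
      (fun n => mul_ne_zero (neg_ne_zero.2 I_ne_zero) (ofReal_ne_zero.2 (hpos n).ne'))
      (by simpa only [map_neg, neg_neg] using neg_mem hneg)
  intro f ε hε
  have hf : f ∈ S.topologicalClosure := hdense ▸ Submodule.mem_top
  obtain ⟨u, hu, hfu⟩ := Metric.mem_closure_iff.1 hf (√ε) (Real.sqrt_pos.2 hε)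
  obtain ⟨N, b, rfl⟩ := Submodule.exists_eq_sum_range_of_mem_span_range hu
  refine ⟨N, b, ?_⟩
  rw [← dist_sum_smul_expLp_sq hH f EventuallyEq.rfl]
  calc _ < √ε ^ 2 := pow_lt_pow_left₀ hfu dist_nonneg two_ne_zero
    _ = ε := Real.sq_sqrt hε.le

/-- If the constant -1 can be approximated arbitrarily well in L²(0,H) by finite
Dirichlet polynomials ∑ bₙ e^{-iλₙt}, then such Dirichlet polynomials are dense
in L²(0,H). -/
theorem density_from_approx_of_neg_one
    (H : ℝ) (hH : 0 < H)
    (lam : ℕ → ℝ) (hmono : StrictMono lam) (hpos : ∀ n, 0 < lam n)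
    (happrox : ∀ ε > (0:ℝ), ∃ (N : ℕ) (b : ℕ → ℂ),
      (∫ t in (0:ℝ)..H,
        ‖(-1 : ℂ) - ∑ n ∈ Finset.range N, b n * Complex.exp (-Complex.I * (lam n) * t)‖ ^ 2)
        < ε) :
    ∀ (f : Lp ℂ 2 (volume.restrict (Set.Ioo (0:ℝ) H))), ∀ ε > (0:ℝ),
      ∃ (N : ℕ) (b : ℕ → ℂ),
        (∫ t in (0:ℝ)..H,
          ‖f t - ∑ n ∈ Finset.range N, b n * Complex.exp (-Complex.I * (lam n) * t)‖ ^ 2)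
          < ε :=
  density_from_approx_of_neg_one_general H hH lam hpos happrox
end

section
/- (Pechersky rearrangement theorem, first part) Let X be a complex Hilbert space and (x_n)_{n\ge 1} a sequence in X such that \sum_{n\ge 1} |\langle x_n, x \rangle| = \infty for every nonzero x \in X. Then the set of finite sums { \sum_{n=1}^m a_n x_n : m \ge 1, a_n \in \mathbb{C}, |a_n| \le 1 } is dense in X. -/
/-!
The set `S` of finite sums `∑ aₙ xₙ` with `‖aₙ‖ ≤ 1` is convex. If it were not dense, Hahn–Banach
would separate a point from its closure by a nonzero functional `f` with `re f` bounded above on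
`S`; choosing the phases `aₙ = conj (f xₙ) / ‖f xₙ‖` makes `re f (∑ aₙ xₙ) = ∑ ‖f xₙ‖`, so
`∑ ‖f xₙ‖` converges. By the Riesz representation `f = ⟪y, ·⟫` with `y ≠ 0`, contradicting the
hypothesis.
-/

open Finset RCLike ComplexConjugate

section BoundedCoeffSums

variable (𝕜 : Type*) {E : Type*} [RCLike 𝕜] [AddCommGroup E] [Module 𝕜 E]

def boundedCoeffSums (x : ℕ → E) : Set E :=
  {v | ∃ (m : ℕ) (a : ℕ → 𝕜), (∀ n, ‖a n‖ ≤ 1) ∧ v = ∑ n ∈ range m, a n • x n}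

def boundedCoeffSumsUpTo (x : ℕ → E) (m : ℕ) : Set E :=
  (fun a : ℕ → 𝕜 => ∑ n ∈ range m, a n • x n) '' {a | ∀ n, ‖a n‖ ≤ 1}

variable {𝕜}

theorem boundedCoeffSums_eq_iUnion (x : ℕ → E) :
    boundedCoeffSums 𝕜 x = ⋃ m, boundedCoeffSumsUpTo 𝕜 x m := by
  ext v
  simp [boundedCoeffSums, boundedCoeffSumsUpTo, eq_comm]

theorem boundedCoeffSumsUpTo_mono (x : ℕ → E) : Monotone (boundedCoeffSumsUpTo 𝕜 x) := by
  intro m M hmM _ ⟨a, ha, hv⟩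
  refine ⟨fun n => if n < m then a n else 0, fun n => ?_, ?_⟩
  · dsimp only
    split_ifs <;> simp [ha n]
  · have hfilter : (range M).filter (· < m) = range m := by
      ext n
      simp only [mem_filter, mem_range]
      omega
    simp only [← hv, ite_smul, zero_smul, ← sum_filter, hfilter]

theorem convex_boundedCoeffSumsUpTo [Module ℝ E] [IsScalarTower ℝ 𝕜 E] (x : ℕ → E) (m : ℕ) :
    Convex ℝ (boundedCoeffSumsUpTo 𝕜 x m) := by
  have hcube : Convex ℝ {a : ℕ → 𝕜 | ∀ n, ‖a n‖ ≤ 1} := by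
    simpa [Set.pi, Metric.closedBall, dist_zero_right] using
      convex_pi (ι := ℕ) (s := Set.univ) fun _ _ => convex_closedBall (0 : 𝕜) 1
  refine hcube.is_linear_image ⟨fun a b => ?_, fun c a => ?_⟩
  · simp [add_smul, sum_add_distrib]
  · simp [smul_sum, smul_assoc]

theorem convex_boundedCoeffSums [Module ℝ E] [IsScalarTower ℝ 𝕜 E] (x : ℕ → E) :
    Convex ℝ (boundedCoeffSums 𝕜 x) := by
  rw [boundedCoeffSums_eq_iUnion]
  exact (boundedCoeffSumsUpTo_mono x).directed_le.convex_iUnion (convex_boundedCoeffSumsUpTo x)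

theorem zero_mem_boundedCoeffSums (x : ℕ → E) : (0 : E) ∈ boundedCoeffSums 𝕜 x :=
  ⟨0, 0, by simp, by simp⟩

end BoundedCoeffSums

theorem RCLike.norm_conj_div_norm_le_one {𝕜 : Type*} [RCLike 𝕜] (z : 𝕜) :
    ‖conj z / (‖z‖ : 𝕜)‖ ≤ 1 := by
  rcases eq_or_ne z 0 with rfl | hz
  · simp
  · rw [norm_div, RCLike.norm_conj, RCLike.norm_ofReal, abs_norm, div_self (norm_ne_zero_iff.2 hz)]

theorem RCLike.conj_div_norm_mul_self {𝕜 : Type*} [RCLike 𝕜] (z : 𝕜) :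
    conj z / (‖z‖ : 𝕜) * z = ‖z‖ := by
  rcases eq_or_ne z 0 with rfl | hz
  · simp
  · have hnorm : (‖z‖ : 𝕜) ≠ 0 := RCLike.ofReal_ne_zero.2 (norm_ne_zero_iff.2 hz)
    rw [div_mul_eq_mul_div, RCLike.conj_mul, sq, mul_div_assoc, div_self hnorm, mul_one]

theorem summable_norm_apply_of_re_le {𝕜 E : Type*} [RCLike 𝕜] [AddCommGroup E] [Module 𝕜 E]
    (f : E →ₗ[𝕜] 𝕜) (x : ℕ → E) {u : ℝ}
    (hf : ∀ v ∈ boundedCoeffSums 𝕜 x, re (f v) ≤ u) :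
    Summable fun n => ‖f (x n)‖ := by
  refine summable_of_sum_range_le (c := u) (fun _ => norm_nonneg _) fun m => ?_
  have hmem : ∑ n ∈ range m, (conj (f (x n)) / (‖f (x n)‖ : 𝕜)) • x n ∈ boundedCoeffSums 𝕜 x :=
    ⟨m, _, fun n => norm_conj_div_norm_le_one _, rfl⟩
  simpa [map_sum, conj_div_norm_mul_self] using hf _ hmem

theorem dense_boundedCoeffSums_of_forall_not_summable {𝕜 E : Type*} [RCLike 𝕜]
    [AddCommGroup E] [TopologicalSpace E] [IsTopologicalAddGroup E] [Module 𝕜 E]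
    [ContinuousSMul 𝕜 E] [Module ℝ E] [IsScalarTower ℝ 𝕜 E] [LocallyConvexSpace ℝ E]
    (x : ℕ → E) (hx : ∀ f : StrongDual 𝕜 E, f ≠ 0 → ¬ Summable fun n => ‖f (x n)‖) :
    Dense (boundedCoeffSums 𝕜 x) := by
  have : ContinuousSMul ℝ E := IsScalarTower.continuousSMul 𝕜
  intro p
  by_contra hp
  obtain ⟨f, u, hfS, hfp⟩ := RCLike.geometric_hahn_banach_closed_point (𝕜 := 𝕜)
    (convex_boundedCoeffSums x).closure isClosed_closure hp
  have hf : f ≠ 0 := by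
    rintro rfl
    have h0 := hfS 0 (subset_closure (zero_mem_boundedCoeffSums x))
    simp only [zero_apply, map_zero] at h0 hfp
    linarith
  exact hx f hf <| summable_norm_apply_of_re_le (f : E →ₗ[𝕜] 𝕜) x fun v hv =>
    (hfS v (subset_closure hv)).le

/-- Pechersky rearrangement theorem, first part: if ∑ |⟨xₙ, x⟩| diverges for
every nonzero x in a complex Hilbert space, then the finite sums ∑ aₙ xₙ with
|aₙ| ≤ 1 are dense. -/
theorem pechersky_first_part
    {X : Type*} [NormedAddCommGroup X] [InnerProductSpace ℂ X] [CompleteSpace X]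
    (x : ℕ → X)
    (hdiv : ∀ y : X, y ≠ 0 → ¬ Summable (fun n => ‖(inner ℂ (x n) y : ℂ)‖)) :
    Dense {v : X | ∃ (m : ℕ) (a : ℕ → ℂ), (∀ n, ‖a n‖ ≤ 1) ∧
      v = ∑ n ∈ Finset.range m, a n • x n} := by
  refine dense_boundedCoeffSums_of_forall_not_summable x fun f hf => ?_
  set y := (InnerProductSpace.toDual ℂ X).symm f
  have hy : y ≠ 0 := by simpa [y] using hf
  simpa [y, norm_inner_symm (x _)] using hdiv y hy
end
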